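/- arXiv:2604.17038 — 10 statements merged into one kernel-verified Lean document; each statement's English description precedes it below -/
import Mathlib

section
/- If a sequence (a_n) of nonnegative reals is bounded above by a constant C, the sequence (n·a_n) is nondecreasing, and a_{mn} ≥ a_n for all positive integers m, n, then lim_{n→∞} a_n exists. -/
theorem limit_exists_of_bounded_mono
    (a : ℕ → ℝ) (C : ℝ) (hC : 0 < C)
    (hbound : ∀ n : ℕ, 1 ≤ n → 0 ≤ a n ∧ a n ≤ C)
    (hmono : ∀ m n : ℕ, 1 ≤ m → m ≤ n → (m : ℝ) * a m ≤ (n : ℝ) * a n)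
    (hmul : ∀ m n : ℕ, 1 ≤ m → 1 ≤ n → a n ≤ a (m * n)) :
    ∃ L : ℝ, Filter.Tendsto a Filter.atTop (nhds L) := by
  set S : Set ℝ := Set.range (fun k : ℕ => a (k + 1)) with hS
  have hne : S.Nonempty := ⟨a 1, 0, rfl⟩
  have hbdd : BddAbove S := by
    refine ⟨C, ?_⟩
    rintro x ⟨k, rfl⟩
    exact (hbound (k + 1) (Nat.le_add_left 1 k)).2
  set L := sSup S with hL
  have hub : ∀ n, 1 ≤ n → a n ≤ L := by
    intro n hn
    apply le_csSup hbdd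
    exact ⟨n - 1, by simp [Nat.sub_add_cancel hn]⟩
  refine ⟨L, Metric.tendsto_atTop.2 ?_⟩
  intro ε hε
  obtain ⟨x, hxS, hx⟩ := exists_lt_of_lt_csSup hne (show L - ε / 2 < L by linarith)
  obtain ⟨N', rfl⟩ := hxS
  set N := N' + 1 with hN
  have hN1 : 1 ≤ N := Nat.le_add_left 1 N'
  have haN0 : 0 ≤ a N := (hbound N hN1).1
  have haNC : a N ≤ C := (hbound N hN1).2
  refine ⟨max N (⌈2 * N * C / ε⌉₊ + 1), ?_⟩
  intro n hn
  have hnN : N ≤ n := le_trans (le_max_left _ _) hn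
  have hn1 : 1 ≤ n := le_trans hN1 hnN
  have hnpos : (0 : ℝ) < n := by exact_mod_cast Nat.lt_of_lt_of_le Nat.zero_lt_one hn1
  set q := n / N with hq
  have hq1 : 1 ≤ q := Nat.one_le_div_iff (by omega) |>.2 hnN
  have hqN1 : 1 ≤ q * N := Nat.one_le_iff_ne_zero.2 (by positivity)
  have hqNn : q * N ≤ n := Nat.div_mul_le_self n N
  have h1 : ((q * N : ℕ) : ℝ) * a (q * N) ≤ (n : ℝ) * a n := hmono (q * N) n hqN1 hqNn
  have h2 : a N ≤ a (q * N) := hmul q N hq1 hN1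
  have h3 : ((n : ℝ) - N) ≤ ((q * N : ℕ) : ℝ) := by
    have hmod : N * q + n % N = n := Nat.div_add_mod n N
    have hlt : n % N < N := Nat.mod_lt n (by omega)
    have e1 : ((N * q : ℕ) : ℝ) + ((n % N : ℕ) : ℝ) = (n : ℝ) := by exact_mod_cast hmod
    have e2 : ((n % N : ℕ) : ℝ) < (N : ℝ) := by exact_mod_cast hlt
    have e3 : ((q * N : ℕ) : ℝ) = ((N * q : ℕ) : ℝ) := by rw [Nat.mul_comm]
    linarith
  have h4 : ((n : ℝ) - N) * a N ≤ (n : ℝ) * a n := by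
    have : ((q * N : ℕ) : ℝ) * a N ≤ ((q * N : ℕ) : ℝ) * a (q * N) := by
      apply mul_le_mul_of_nonneg_left h2 (by positivity)
    nlinarith
  -- a n ≥ a N - N * C / n
  have h5 : a N - (N : ℝ) * C / n ≤ a n := by
    have key : ((N : ℝ) * C / n) * n = (N : ℝ) * C := div_mul_cancel₀ _ (ne_of_gt hnpos)
    nlinarith [h4, key, mul_le_mul_of_nonneg_left haNC (Nat.cast_nonneg N : (0:ℝ) ≤ (N:ℝ)), hnpos]
  have hceil : 2 * (N : ℝ) * C / ε ≤ n := by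
    have h6 : (⌈2 * (N : ℝ) * C / ε⌉₊ + 1 : ℕ) ≤ n := le_trans (le_max_right _ _) hn
    have h7 : 2 * (N : ℝ) * C / ε ≤ ⌈2 * (N : ℝ) * C / ε⌉₊ := Nat.le_ceil _
    calc 2 * (N : ℝ) * C / ε ≤ (⌈2 * (N : ℝ) * C / ε⌉₊ : ℝ) := h7
      _ ≤ ((⌈2 * (N : ℝ) * C / ε⌉₊ + 1 : ℕ) : ℝ) := by push_cast; linarith
      _ ≤ n := by exact_mod_cast h6
  have h8 : (N : ℝ) * C / n ≤ ε / 2 := by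
    rw [div_le_iff₀ hnpos]
    have : 2 * (N : ℝ) * C ≤ n * ε := by
      have := (div_le_iff₀ hε).1 hceil
      linarith
    linarith
  have hlow : L - ε < a n := by
    have : L - ε / 2 < a N := hx
    linarith
  have hhigh : a n ≤ L := hub n hn1
  rw [Real.dist_eq, abs_lt]
  constructor <;> linarith
end

section
/- For every real x > 0 and integer r ≥ 3, f(2x) ≥ 2·f(x), where f(x) = x^r/r! − C(x,r) and C(x,r) is the extended binomial coefficient, defined as x(x−1)···(x−r+1)/r! when x ≥ r−1 and 0 when x < r−1. -/
/-- The extended binomial coefficient: `x(x-1)⋯(x-r+1)/r!` when `x ≥ r-1`, and `0` otherwise. -/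
noncomputable def extBinom (x : ℝ) (r : ℕ) : ℝ :=
  if (r : ℝ) - 1 ≤ x then (∏ j ∈ Finset.range r, (x - (j : ℝ))) / (Nat.factorial r) else 0

/-- `f(x) = x^r/r! - C(x,r)` -/
noncomputable def fDiff (r : ℕ) (x : ℝ) : ℝ :=
  x ^ r / (Nat.factorial r) - extBinom x r

lemma factor_nonneg {r : ℕ} {x : ℝ} (hx : (r : ℝ) - 1 ≤ x) :
    ∀ j ∈ Finset.range r, 0 ≤ x - (j : ℝ) := by
  intro j hj
  rw [Finset.mem_range] at hj
  have : (j : ℝ) + 1 ≤ (r : ℝ) := by exact_mod_cast hj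
  linarith

lemma prod_nonneg' {r : ℕ} {x : ℝ} (hx : (r : ℝ) - 1 ≤ x) :
    0 ≤ ∏ j ∈ Finset.range r, (x - (j : ℝ)) :=
  Finset.prod_nonneg (factor_nonneg hx)

lemma prod_le_pow {r : ℕ} {x : ℝ} (hx : (r : ℝ) - 1 ≤ x) :
    ∏ j ∈ Finset.range r, (x - (j : ℝ)) ≤ x ^ r := by
  calc ∏ j ∈ Finset.range r, (x - (j : ℝ)) ≤ ∏ j ∈ Finset.range r, x := by
        apply Finset.prod_le_prod (factor_nonneg hx)
        intro j hj
        have : (0:ℝ) ≤ (j:ℝ) := by positivity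
        linarith
    _ = x ^ r := by rw [Finset.prod_const, Finset.card_range]

lemma q_ge {r : ℕ} {x : ℝ} (hx : (r : ℝ) - 1 ≤ x) :
    2 ^ r * ∏ j ∈ Finset.range r, (x - (j : ℝ)) ≤ ∏ j ∈ Finset.range r, (2 * x - (j : ℝ)) := by
  have h : 2 ^ r * ∏ j ∈ Finset.range r, (x - (j : ℝ))
      = ∏ j ∈ Finset.range r, (2 * (x - (j : ℝ))) := by
    rw [Finset.prod_mul_distrib, Finset.prod_const, Finset.card_range]
  rw [h]
  apply Finset.prod_le_prod
  · intro j hj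
    have := factor_nonneg hx j hj
    linarith
  · intro j hj
    have : (0:ℝ) ≤ (j:ℝ) := by positivity
    linarith

lemma key (x : ℝ) (hx : 0 ≤ x) : ∀ r : ℕ, (r : ℝ) - 1 ≤ x →
    2 ^ r * (x ^ r - ∏ j ∈ Finset.range r, (x - (j : ℝ)))
      ≤ 2 * ((2 * x) ^ r - ∏ j ∈ Finset.range r, (2 * x - (j : ℝ))) := by
  intro r
  induction r with
  | zero => simp
  | succ r ih =>
    intro hr
    have hr' : (r : ℝ) - 1 ≤ x := by push_cast at hr ⊢; linarith
    have IH := ih hr'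
    have hq := q_ge hr'
    have hrn : (0:ℝ) ≤ (r:ℝ) := by positivity
    rw [Finset.prod_range_succ, Finset.prod_range_succ, pow_succ, pow_succ, pow_succ]
    set P := ∏ j ∈ Finset.range r, (x - (j : ℝ)) with hP
    set Q := ∏ j ∈ Finset.range r, (2 * x - (j : ℝ)) with hQ
    nlinarith [mul_nonneg hx (sub_nonneg.2 IH), mul_nonneg hrn (sub_nonneg.2 hq)]

theorem fDiff_two_mul_ge (r : ℕ) (hr : 3 ≤ r) (x : ℝ) (hx : 0 < x) :
    2 * fDiff r x ≤ fDiff r (2 * x) := by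
  have hfac : (0:ℝ) < (Nat.factorial r : ℝ) := by
    exact_mod_cast Nat.factorial_pos r
  have hxr : (0:ℝ) < x ^ r := by positivity
  have h2r : (4:ℝ) ≤ 2 ^ r := by
    calc (4:ℝ) = 2^2 := by norm_num
    _ ≤ 2^r := by apply pow_le_pow_right₀ (by norm_num); omega
  unfold fDiff extBinom
  by_cases h1 : (r : ℝ) - 1 ≤ x
  · -- case C : x ≥ r - 1
    have h2 : (r : ℝ) - 1 ≤ 2 * x := by linarith
    rw [if_pos h1, if_pos h2]
    have hk := key x hx.le r h1
    have hple := prod_le_pow h1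
    set P := ∏ j ∈ Finset.range r, (x - (j : ℝ))
    set Q := ∏ j ∈ Finset.range r, (2 * x - (j : ℝ))
    rw [div_sub_div_same, div_sub_div_same, ← mul_div_assoc, div_le_div_iff₀ hfac hfac]
    have hkey2 : 2 * (x ^ r - P) ≤ (2*x)^r - Q := by nlinarith
    nlinarith
  · by_cases h2 : (r : ℝ) - 1 ≤ 2 * x
    · -- case B : x < r - 1 ≤ 2x
      rw [if_neg h1, if_pos h2]
      obtain ⟨s, rfl⟩ : ∃ s, r = s + 3 := ⟨r - 3, by omega⟩
      have hsplit : ∏ j ∈ Finset.range (s+3), (2 * x - (j : ℝ))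
          = (∏ j ∈ Finset.range (s+2), (2 * x - (j : ℝ))) * (2 * x - ((s+2 : ℕ) : ℝ)) := by
        rw [Finset.prod_range_succ]
      have hffac : ∀ j ∈ Finset.range (s+2), 0 ≤ 2 * x - (j : ℝ) := by
        intro j hj
        rw [Finset.mem_range] at hj
        have hj' : (j:ℝ) < (s:ℝ) + 2 := by exact_mod_cast hj
        push_cast at h2
        linarith
      have hb1 : ∏ j ∈ Finset.range (s+2), (2 * x - (j : ℝ)) ≤ (2*x)^(s+2) := by
        calc ∏ j ∈ Finset.range (s+2), (2 * x - (j : ℝ)) ≤ ∏ j ∈ Finset.range (s+2), (2*x) := by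
              apply Finset.prod_le_prod hffac
              intro j hj
              have : (0:ℝ) ≤ (j:ℝ) := by positivity
              linarith
          _ = (2*x)^(s+2) := by rw [Finset.prod_const, Finset.card_range]
      have hb2 : 0 ≤ 2 * x - ((s+2:ℕ) : ℝ) := by push_cast at h2 ⊢; linarith
      have hb3 : 2 * x - ((s+2:ℕ) : ℝ) ≤ x := by push_cast at h1 ⊢; linarith
      have h2x : (0:ℝ) ≤ (2*x)^(s+2) := by positivity
      have hQ : ∏ j ∈ Finset.range (s+3), (2 * x - (j : ℝ)) ≤ (2*x)^(s+2) * x := by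
        rw [hsplit]
        calc (∏ j ∈ Finset.range (s+2), (2 * x - (j : ℝ))) * (2 * x - ((s+2:ℕ):ℝ))
            ≤ (2*x)^(s+2) * (2 * x - ((s+2:ℕ):ℝ)) := mul_le_mul_of_nonneg_right hb1 hb2
          _ ≤ (2*x)^(s+2) * x := mul_le_mul_of_nonneg_left hb3 h2x
      set Q := ∏ j ∈ Finset.range (s+3), (2 * x - (j : ℝ))
      rw [sub_zero, div_sub_div_same, ← mul_div_assoc, div_le_div_iff₀ hfac hfac]
      have hpow : (2*x)^(s+3) = 2^(s+3) * x^(s+3) := by rw [mul_pow]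
      have hpow2 : (2*x)^(s+2) * x = 2^(s+2) * x^(s+3) := by rw [mul_pow]; ring
      have h4 : (2:ℝ) ≤ 2^(s+2) := by
        calc (2:ℝ) = 2^1 := by norm_num
        _ ≤ 2^(s+2) := by apply pow_le_pow_right₀ (by norm_num); omega
      have hxs : (0:ℝ) < x^(s+3) := by positivity
      have hpow3 : (2*x)^(s+3) = 2 * (2^(s+2) * x^(s+3)) := by rw [mul_pow]; ring
      have hmain : 2 * x^(s+3) ≤ (2*x)^(s+3) - Q := by
        nlinarith [mul_nonneg (by linarith : (0:ℝ) ≤ 2^(s+2) - 2) hxs.le]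
      nlinarith [mul_le_mul_of_nonneg_right hmain hfac.le]
    · -- case A : 2x < r - 1
      rw [if_neg h1, if_neg h2]
      rw [sub_zero, sub_zero, mul_pow, ← mul_div_assoc, div_le_div_iff₀ hfac hfac]
      nlinarith [mul_pos hxr hfac]
end

section
/- For integers k ≥ r ≥ 3, C(k,r) − Σ_{i=1}^∞ C(k/2^i, r) ≤ (k^r/r!)·(1 − 1/(2^r − 1)), where C(x,r) denotes the extended binomial coefficient (equal to x(x−1)···(x−r+1)/r! for x ≥ r−1 and 0 for x < r−1). Note the sum is finite since C(k/2^i, r) = 0 once k/2^i < r−1. -/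
/-!
Write `D(x) = x^r - r! C(x,r)` for the defect of the extended binomial coefficient. Since
`∑_{i ≥ 1} (k/2^i)^r = k^r/(2^r - 1)`, the claim is `∑_{i ≥ 1} D(k/2^i) ≤ D(k)`. Weierstrass'
product inequality gives `D(x) ≤ (∑_{j<r} j) x^(r-1) = C(r,2) x^(r-1)` for every `x ≥ 0` (for
`x < r - 1` trivially, as then `D(x) = x^r`), so the left side is at most
`C(r,2) k^(r-1)/(2^(r-1) - 1) ≤ (r-1) k^(r-1)`, while `∏_{j<r} (k-j) ≤ k^(r-1) (k-r+1)` gives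
`D(k) ≥ (r-1) k^(r-1)`.
-/

open Finset
open scoped Nat

noncomputable def extBinomDefect (r : ℕ) (x : ℝ) : ℝ :=
  x ^ r - r ! * extBinom x r

lemma extBinom_eq_div (x : ℝ) (r : ℕ) : extBinom x r = (x ^ r - extBinomDefect r x) / r ! := by
  rw [extBinomDefect, sub_sub_cancel, mul_div_cancel_left₀ _ (by positivity)]

lemma sum_range_succ_le_mul_two_pow_sub_one (n : ℕ) :
    ∑ j ∈ range (n + 1), (j : ℝ) ≤ n * (2 ^ n - 1) := by
  induction n with
  | zero => simp
  | succ n ih =>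
    rw [sum_range_succ, pow_succ]
    push_cast
    nlinarith [one_le_pow₀ (M₀ := ℝ) (a := 2) (n := n) (by norm_num)]

lemma hasSum_pow_div_pow_succ (y : ℝ) {a : ℝ} (ha : 1 < a) {r : ℕ} (hr : r ≠ 0) :
    HasSum (fun i : ℕ => (y / a ^ (i + 1)) ^ r) (y ^ r / (a ^ r - 1)) := by
  have har : 1 < a ^ r := one_lt_pow₀ ha hr
  have hterm (i : ℕ) : (y / a ^ (i + 1)) ^ r = y ^ r / a ^ r * (a ^ r)⁻¹ ^ i := by
    rw [div_pow, ← pow_mul, mul_comm (i + 1), pow_mul, pow_succ, inv_pow]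
    field_simp
  have hsum : y ^ r / (a ^ r - 1) = y ^ r / a ^ r * (1 - (a ^ r)⁻¹)⁻¹ := by
    field_simp [(sub_pos.mpr har).ne']
  simp_rw [hterm, hsum]
  exact (hasSum_geometric_of_lt_one (by positivity) (inv_lt_one_of_one_lt₀ har)).mul_left _

section Defect

variable {x y : ℝ} {n : ℕ}

lemma prod_range_succ_sub_le (hx : n ≤ x) :
    ∏ j ∈ range (n + 1), (x - j) ≤ x ^ n * (x - n) := by
  have hfactors : ∏ j ∈ range n, (x - j) ≤ x ^ n := by
    simpa using prod_le_prod (s := range n) (g := fun _ => x)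
      (fun j hj => by
        have : (j : ℝ) ≤ n := by exact_mod_cast (mem_range.mp hj).le
        linarith)
      fun j _ => by linarith [j.cast_nonneg (α := ℝ)]
  rw [prod_range_succ]
  exact mul_le_mul_of_nonneg_right hfactors (by linarith)

lemma prod_range_succ_sub_le_pow (hx : n ≤ x) :
    ∏ j ∈ range (n + 1), (x - j) ≤ x ^ (n + 1) := by
  have hn : (0 : ℝ) ≤ n := n.cast_nonneg
  rw [pow_succ]
  exact (prod_range_succ_sub_le hx).trans
    (mul_le_mul_of_nonneg_left (by linarith) (pow_nonneg (by linarith) n))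

lemma pow_sub_prod_range_sub_le (hx : n ≤ x) :
    x ^ (n + 1) - ∏ j ∈ range (n + 1), (x - j) ≤ (∑ j ∈ range (n + 1), (j : ℝ)) * x ^ n := by
  induction n with
  | zero => simp
  | succ n ih =>
    push_cast at hx
    have hx₀ : 0 ≤ x := by linarith [n.cast_nonneg (α := ℝ)]
    have hprod := prod_range_succ_sub_le_pow (x := x) (n := n) (by linarith)
    have ih := mul_le_mul_of_nonneg_left (ih (by linarith)) hx₀
    rw [prod_range_succ, sum_range_succ]
    push_cast
    -- `x^(n+2) - P (x - (n+1)) = x (x^(n+1) - P) + (n+1) P` with `P ≤ x^(n+1)`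
    linear_combination ih + ((n : ℝ) + 1) * hprod

lemma extBinomDefect_succ_of_le (hx : n ≤ x) :
    extBinomDefect (n + 1) x = x ^ (n + 1) - ∏ j ∈ range (n + 1), (x - j) := by
  rw [extBinomDefect, extBinom, if_pos (by push_cast; linarith),
    mul_div_cancel₀ _ (by positivity)]

lemma extBinomDefect_succ_of_lt (hx : x < n) :
    extBinomDefect (n + 1) x = x ^ (n + 1) := by
  rw [extBinomDefect, extBinom, if_neg (by push_cast; linarith), mul_zero, sub_zero]

lemma extBinomDefect_nonneg (hx : 0 ≤ x) : 0 ≤ extBinomDefect (n + 1) x := by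
  rcases lt_or_ge x n with h | h
  · rw [extBinomDefect_succ_of_lt h]
    positivity
  · rw [extBinomDefect_succ_of_le h, sub_nonneg]
    exact prod_range_succ_sub_le_pow h

lemma extBinomDefect_le (hx : 0 ≤ x) :
    extBinomDefect (n + 1) x ≤ (∑ j ∈ range (n + 1), (j : ℝ)) * x ^ n := by
  rcases lt_or_ge x n with h | h
  · have hn : (n : ℝ) ≤ ∑ j ∈ range (n + 1), (j : ℝ) :=
      single_le_sum (f := fun j : ℕ => (j : ℝ)) (fun j _ => j.cast_nonneg) (self_mem_range_succ n)
    rw [extBinomDefect_succ_of_lt h, pow_succ']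
    exact mul_le_mul_of_nonneg_right (h.le.trans hn) (pow_nonneg hx n)
  · rw [extBinomDefect_succ_of_le h]
    exact pow_sub_prod_range_sub_le h

lemma mul_pow_le_extBinomDefect (hx : n ≤ x) :
    n * x ^ n ≤ extBinomDefect (n + 1) x := by
  rw [extBinomDefect_succ_of_le hx]
  linarith [prod_range_succ_sub_le hx, pow_succ x n]

lemma summable_extBinomDefect_div_two_pow (hn : n ≠ 0) (hy : 0 ≤ y) :
    Summable fun i : ℕ => extBinomDefect (n + 1) (y / 2 ^ (i + 1)) :=
  ((hasSum_pow_div_pow_succ y one_lt_two hn).mul_left _).summable.of_nonneg_of_le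
    (fun _ => extBinomDefect_nonneg (by positivity)) fun _ => extBinomDefect_le (by positivity)

lemma tsum_extBinomDefect_div_two_pow_le (hn : n ≠ 0) (hy : n ≤ y) :
    ∑' i : ℕ, extBinomDefect (n + 1) (y / 2 ^ (i + 1)) ≤ extBinomDefect (n + 1) y := by
  have hy₀ : 0 ≤ y := n.cast_nonneg.trans hy
  have hden : (0 : ℝ) < 2 ^ n - 1 := sub_pos.mpr (one_lt_pow₀ one_lt_two hn)
  calc ∑' i : ℕ, extBinomDefect (n + 1) (y / 2 ^ (i + 1))
      ≤ (∑ j ∈ range (n + 1), (j : ℝ)) * (y ^ n / (2 ^ n - 1)) :=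
        hasSum_le (fun _ => extBinomDefect_le (by positivity))
          (summable_extBinomDefect_div_two_pow hn hy₀).hasSum
          ((hasSum_pow_div_pow_succ y one_lt_two hn).mul_left _)
    _ ≤ n * y ^ n := by
        rw [mul_div_assoc', div_le_iff₀ hden, mul_right_comm]
        exact mul_le_mul_of_nonneg_right (sum_range_succ_le_mul_two_pow_sub_one n)
          (pow_nonneg hy₀ n)
    _ ≤ extBinomDefect (n + 1) y := mul_pow_le_extBinomDefect hy

end Defect

theorem sum_halving_bound (k r : ℕ) (hr : 3 ≤ r) (hk : r ≤ k) :
    extBinom (k : ℝ) r - ∑' i : ℕ, extBinom ((k : ℝ) / 2 ^ (i + 1)) r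
      ≤ (k : ℝ) ^ r / (Nat.factorial r) * (1 - 1 / (2 ^ r - 1)) := by
  obtain ⟨n, rfl⟩ : ∃ n, r = n + 1 := ⟨r - 1, by omega⟩
  have hn : n ≠ 0 := by omega
  have hkn : (n : ℝ) ≤ k := by exact_mod_cast (by omega : n ≤ k)
  have hpow := hasSum_pow_div_pow_succ (k : ℝ) one_lt_two n.succ_ne_zero
  have htsum : ∑' i : ℕ, extBinom ((k : ℝ) / 2 ^ (i + 1)) (n + 1) =
      ((k : ℝ) ^ (n + 1) / (2 ^ (n + 1) - 1) -
        ∑' i : ℕ, extBinomDefect (n + 1) ((k : ℝ) / 2 ^ (i + 1))) / (n + 1)! := by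
    simp_rw [extBinom_eq_div]
    rw [tsum_div_const, hpow.summable.tsum_sub
      (summable_extBinomDefect_div_two_pow hn (by positivity)), hpow.tsum_eq]
  rw [htsum, extBinom_eq_div, div_sub_div_same,
    show (k : ℝ) ^ (n + 1) / (n + 1)! * (1 - 1 / (2 ^ (n + 1) - 1)) =
      ((k : ℝ) ^ (n + 1) - (k : ℝ) ^ (n + 1) / (2 ^ (n + 1) - 1)) / (n + 1)! by ring]
  gcongr ?_ / _
  linarith [tsum_extBinomDefect_div_two_pow_le hn hkn]
end

section
/- For any integer r ≥ 3 and real x ∈ [1/3, 1/2], h(x) := (−1/2 + 3x/2)·2^r + 1/2 − x/2 − (2x)^r ≥ 0. -/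
theorem h3_nonneg (r : ℕ) (hr : 3 ≤ r) (x : ℝ) (h1 : 1 / 3 ≤ x) (h2 : x ≤ 1 / 2) :
    0 ≤ (-(1 / 2) + 3 * x / 2) * 2 ^ r + 1 / 2 - x / 2 - (2 * x) ^ r := by
  have hA : (8 : ℝ) ≤ 2 ^ r := by
    calc (8 : ℝ) = 2 ^ 3 := by norm_num
    _ ≤ 2 ^ r := by exact pow_le_pow_right₀ (by norm_num) hr
  have hc0 : (0 : ℝ) ≤ (2 / 3 : ℝ) ^ r := by positivity
  have hc1 : (2 / 3 : ℝ) ^ r ≤ 8 / 27 := by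
    calc (2 / 3 : ℝ) ^ r ≤ (2 / 3 : ℝ) ^ 3 :=
      pow_le_pow_of_le_one (by norm_num) (by norm_num) hr
    _ = 8 / 27 := by norm_num
  -- chord bound from convexity of y ^ r on [0, ∞)
  have conv := convexOn_pow (𝕜 := ℝ) r
  have hchord : (2 * x) ^ r ≤ (3 - 6 * x) * (2 / 3 : ℝ) ^ r + (6 * x - 2) := by
    have := conv.2 (Set.mem_Ici.mpr (by norm_num : (0:ℝ) ≤ 2/3))
      (Set.mem_Ici.mpr (by norm_num : (0:ℝ) ≤ 1))
      (by linarith : (0:ℝ) ≤ 3 - 6 * x) (by linarith : (0:ℝ) ≤ 6 * x - 2)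
      (by ring)
    simp only [smul_eq_mul] at this
    have hx : (3 - 6 * x) * (2 / 3 : ℝ) + (6 * x - 2) * 1 = 2 * x := by ring
    rw [hx] at this
    calc (2 * x) ^ r ≤ (3 - 6 * x) * (2 / 3 : ℝ) ^ r + (6 * x - 2) * 1 ^ r := this
    _ = (3 - 6 * x) * (2 / 3 : ℝ) ^ r + (6 * x - 2) := by rw [one_pow]; ring
  nlinarith [mul_nonneg (by linarith : (0:ℝ) ≤ 3 * x - 1) (by linarith : (0:ℝ) ≤ 2 ^ r - 8),
    mul_nonneg (by linarith : (0:ℝ) ≤ 3 - 6 * x) (by linarith : (0:ℝ) ≤ 8 / 27 - (2/3:ℝ) ^ r)]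
end

section
/- For any integer r ≥ 3 and real c ≥ 1 and x ∈ [1/c, 1], h_1(x) := x − x^r − (1/2 − x/2)·(1/c^r) ≥ 0. -/
theorem h1_nonneg (r : ℕ) (hr : 3 ≤ r) (c : ℝ) (hc : 1 ≤ c) (x : ℝ)
    (h1 : 1 / c ≤ x) (h2 : x ≤ 1) :
    0 ≤ x - x ^ r - (1 / 2 - x / 2) * (1 / c ^ r) := by
  have hc0 : 0 < c := lt_of_lt_of_le one_pos hc
  have hx0 : 0 < x := lt_of_lt_of_le (by positivity) h1
  have h3 : x ^ r ≤ x ^ 3 := pow_le_pow_of_le_one hx0.le h2 hr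
  have h4 : 1 / c ^ r ≤ x ^ r := by
    calc 1 / c ^ r = (1 / c) ^ r := by rw [div_pow, one_pow]
    _ ≤ x ^ r := pow_le_pow_left₀ (by positivity) h1 r
  have h5 : 0 ≤ 1 / 2 - x / 2 := by linarith
  have h6 : (1 / 2 - x / 2) * (1 / c ^ r) ≤ (1 / 2 - x / 2) * x ^ 3 :=
    mul_le_mul_of_nonneg_left (le_trans h4 h3) h5
  nlinarith [mul_nonneg (mul_nonneg hx0.le (by nlinarith : (0:ℝ) ≤ 2 + 2*x - x^2)) (by linarith : (0:ℝ) ≤ 1 - x)]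
end

section
/- For any integer r ≥ 3, real c ≥ 1 and real y ∈ [1/2, 1], h_2(y) := c^{r−1}·y − y^r − 1/2 + y/(2c) ≥ 0. -/
theorem h2_nonneg (r : ℕ) (hr : 3 ≤ r) (c : ℝ) (hc : 1 ≤ c) (y : ℝ)
    (h1 : 1 / 2 ≤ y) (h2 : y ≤ 1) :
    0 ≤ c ^ (r - 1) * y - y ^ r - 1 / 2 + y / (2 * c) := by
  have hc0 : (0:ℝ) < c := lt_of_lt_of_le one_pos hc
  have hy0 : (0:ℝ) < y := lt_of_lt_of_le (by norm_num) h1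
  have h3 : y ^ r ≤ y ^ 3 := pow_le_pow_of_le_one hy0.le h2 hr
  have h4 : c ^ 2 ≤ c ^ (r - 1) := pow_le_pow_right₀ hc (by omega)
  have hdiv : y * (3/2 - c^2) ≤ y / (2*c) := by
    rw [le_div_iff₀ (by positivity)]
    nlinarith [mul_nonneg (sub_nonneg.2 hc) (sq_nonneg (c+1)), hy0.le,
      mul_nonneg (mul_nonneg hy0.le (sub_nonneg.2 hc)) (sq_nonneg c)]
  nlinarith [mul_le_mul_of_nonneg_right h4 hy0.le, h3, hdiv,
    mul_nonneg (sub_nonneg.2 h1) (sub_nonneg.2 h2), sq_nonneg (y - 1)]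
end

section
/- For integers k ≥ r ≥ 2, integer ℓ ≥ 2 and integer m with 0 ≤ m ≤ k, g(k, ℓ) − g(k − m, ℓ) ≤ (m·r/(2^{r−1}·k))·C(k, r), where g(s, ℓ) = (ℓ − q)·C(⌊s/ℓ⌋, r) + q·C(⌈s/ℓ⌉, r) with q = s mod ℓ, and C(a, r) denotes the integer binomial coefficient. -/
/-- `g(s,ℓ) = (ℓ-q)·C(⌊s/ℓ⌋,r) + q·C(⌈s/ℓ⌉,r)` with `q = s mod ℓ`. -/
def gBal (r s ℓ : ℕ) : ℕ :=
  (ℓ - s % ℓ) * Nat.choose (s / ℓ) r + (s % ℓ) * Nat.choose ((s + ℓ - 1) / ℓ) r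

/-!
Writing `s = ℓ a + q` with `0 ≤ q ≤ ℓ`, Pascal's rule gives `g(s) = ℓ·C(a, r) + q·C(a, r-1)`, so
adding one element raises `g` by `C(⌊s/ℓ⌋, r-1)`. Since `ℓ ≥ 2` and `2^t·C(a, t) ≤ C(2a, t)`, each
such increment with `s < k` is at most `C(k-1, r-1) / 2^(r-1)`, and summing `m` of them gives
`m·C(k-1, r-1) / 2^(r-1) = m·r·C(k, r) / (2^(r-1)·k)`.
-/

namespace Nat

theorem two_pow_mul_descFactorial_le (a t : ℕ) :
    2 ^ t * a.descFactorial t ≤ (2 * a).descFactorial t := by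
  induction t with
  | zero => simp
  | succ t ih =>
    rw [descFactorial_succ, descFactorial_succ]
    calc 2 ^ (t + 1) * ((a - t) * a.descFactorial t)
        = 2 * (a - t) * (2 ^ t * a.descFactorial t) := by ring
      _ ≤ (2 * a - t) * (2 * a).descFactorial t := Nat.mul_le_mul (by omega) ih

theorem two_pow_mul_choose_le (a t : ℕ) : 2 ^ t * a.choose t ≤ (2 * a).choose t := by
  have h := two_pow_mul_descFactorial_le a t
  rw [descFactorial_eq_factorial_mul_choose, descFactorial_eq_factorial_mul_choose,
    mul_left_comm] at h
  exact Nat.le_of_mul_le_mul_left h t.factorial_pos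

theorem two_pow_mul_choose_div_le {ℓ : ℕ} (hl : 2 ≤ ℓ) (s t : ℕ) :
    2 ^ t * (s / ℓ).choose t ≤ s.choose t :=
  calc 2 ^ t * (s / ℓ).choose t
      ≤ 2 ^ t * (s / 2).choose t :=
        Nat.mul_le_mul_left _ (choose_le_choose _ (Nat.div_le_div_left hl two_pos))
    _ ≤ (2 * (s / 2)).choose t := two_pow_mul_choose_le _ _
    _ ≤ s.choose t := choose_le_choose _ (Nat.mul_div_le s 2)

theorem le_add_mul_of_forall_succ_le {f : ℕ → ℕ} {n j c : ℕ}
    (h : ∀ i < j, f (n + i + 1) ≤ f (n + i) + c) : f (n + j) ≤ f n + j * c := by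
  induction j with
  | zero => simp
  | succ j ih =>
    calc f (n + (j + 1)) ≤ f (n + j) + c := h j j.lt_succ_self
      _ ≤ f n + j * c + c := Nat.add_le_add_right (ih fun i hi => h i (by omega)) c
      _ = f n + (j + 1) * c := by ring

end Nat

theorem gBal_mul_add_of_lt {r ℓ q : ℕ} (hq : q < ℓ) (a : ℕ) :
    gBal (r + 1) (ℓ * a + q) ℓ = ℓ * a.choose (r + 1) + q * a.choose r := by
  have hℓ : 0 < ℓ := by omega
  have hdiv : (ℓ * a + q) / ℓ = a := by
    rw [Nat.mul_add_div hℓ, Nat.div_eq_of_lt hq, add_zero]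
  have hmod : (ℓ * a + q) % ℓ = q := by rw [Nat.mul_add_mod, Nat.mod_eq_of_lt hq]
  rcases Nat.eq_zero_or_pos q with rfl | hq0
  · rw [gBal, hdiv, hmod]
    simp
  · have hceil : (ℓ * a + q + ℓ - 1) / ℓ = a + 1 := by
      rw [show ℓ * a + q + ℓ - 1 = ℓ * (a + 1) + (q - 1) by rw [mul_add]; omega,
        Nat.mul_add_div hℓ, Nat.div_eq_of_lt (by omega), add_zero]
    rw [gBal, hdiv, hmod, hceil, Nat.choose_succ_succ']
    zify [hq.le]
    ring

theorem gBal_mul_add {r ℓ q : ℕ} (hq : q ≤ ℓ) (a : ℕ) :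
    gBal (r + 1) (ℓ * a + q) ℓ = ℓ * a.choose (r + 1) + q * a.choose r := by
  rcases hq.lt_or_eq with hq | rfl
  · exact gBal_mul_add_of_lt hq a
  · rcases Nat.eq_zero_or_pos q with rfl | hℓ
    · simp [gBal]
    rw [← mul_add_one, ← add_zero (q * (a + 1)), gBal_mul_add_of_lt hℓ, Nat.choose_succ_succ']
    ring

theorem gBal_succ {ℓ : ℕ} (hℓ : 0 < ℓ) (r s : ℕ) :
    gBal (r + 1) (s + 1) ℓ = gBal (r + 1) s ℓ + (s / ℓ).choose r := by
  have hq : s % ℓ < ℓ := Nat.mod_lt s hℓ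
  have hs := gBal_mul_add (r := r) hq.le (s / ℓ)
  have hs' := gBal_mul_add (r := r) (q := s % ℓ + 1) hq (s / ℓ)
  rw [Nat.div_add_mod] at hs
  rw [← add_assoc, Nat.div_add_mod] at hs'
  rw [hs, hs']
  ring

theorem two_pow_mul_gBal_le {r ℓ k m : ℕ} (hl : 2 ≤ ℓ) (hm : m ≤ k) :
    2 ^ r * gBal (r + 1) k ℓ ≤ 2 ^ r * gBal (r + 1) (k - m) ℓ + m * (k - 1).choose r := by
  have hk : k = k - m + m := by omega
  conv_lhs => rw [hk]
  refine Nat.le_add_mul_of_forall_succ_le (f := fun s => 2 ^ r * gBal (r + 1) s ℓ) fun i hi => ?_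
  have hinc : 2 ^ r * ((k - m + i) / ℓ).choose r ≤ (k - 1).choose r :=
    (Nat.two_pow_mul_choose_div_le hl _ r).trans (Nat.choose_le_choose r (by omega))
  simp only [gBal_succ (by omega : 0 < ℓ), mul_add]
  omega

theorem gBal_diff_bound (k r ℓ m : ℕ) (hr : 2 ≤ r) (hk : r ≤ k) (hl : 2 ≤ ℓ)
    (hm : m ≤ k) :
    (gBal r k ℓ : ℝ) - (gBal r (k - m) ℓ : ℝ)
      ≤ (m : ℝ) * (r : ℝ) / (2 ^ (r - 1) * (k : ℝ)) * (Nat.choose k r : ℝ) := by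
  obtain ⟨t, rfl⟩ : ∃ t, r = t + 1 := ⟨r - 1, by omega⟩
  obtain ⟨n, rfl⟩ : ∃ n, k = n + 1 := ⟨k - 1, by omega⟩
  have hbound : (2 : ℝ) ^ t * gBal (t + 1) (n + 1) ℓ
      ≤ 2 ^ t * gBal (t + 1) (n + 1 - m) ℓ + m * n.choose t := by
    exact_mod_cast two_pow_mul_gBal_le (r := t) hl hm
  have habsorb : ((n + 1 : ℕ) : ℝ) * n.choose t = (n + 1).choose (t + 1) * (t + 1 : ℕ) := by
    exact_mod_cast Nat.add_one_mul_choose_eq n t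
  rw [Nat.add_sub_cancel, div_mul_eq_mul_div, le_div_iff₀ (by positivity)]
  push_cast at habsorb ⊢
  calc ((gBal (t + 1) (n + 1) ℓ : ℝ) - gBal (t + 1) (n + 1 - m) ℓ) * (2 ^ t * (n + 1))
      = (2 ^ t * gBal (t + 1) (n + 1) ℓ - 2 ^ t * gBal (t + 1) (n + 1 - m) ℓ) * (n + 1) := by
        ring
    _ ≤ m * n.choose t * (n + 1) := by gcongr; linarith
    _ = m * (t + 1) * (n + 1).choose (t + 1) := by linear_combination m * habsorb
end

section
/- For integers k ≥ r ≥ 3 with r−1 ≤ k/2, Σ_{s=k−m}^{k−1} C(⌊s/2⌋, r−1) ≤ (m/2^{r−1})·C(k, r−1) for any integer 0 ≤ m ≤ k, where C(·,·) is the integer binomial coefficient. -/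
lemma descFac_double (m n : ℕ) :
    2 ^ n * Nat.descFactorial m n ≤ Nat.descFactorial (2 * m) n := by
  induction n with
  | zero => simp
  | succ n ih =>
    rw [Nat.descFactorial_succ, Nat.descFactorial_succ, pow_succ]
    calc 2 ^ n * 2 * ((m - n) * Nat.descFactorial m n)
        = (2 * (m - n)) * (2 ^ n * Nat.descFactorial m n) := by ring
      _ ≤ (2 * m - n) * Nat.descFactorial (2 * m) n := by
          apply Nat.mul_le_mul _ ih
          omega
      _ = (2 * m - n) * Nat.descFactorial (2 * m) n := rfl

lemma choose_double (m n : ℕ) :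
    2 ^ n * Nat.choose m n ≤ Nat.choose (2 * m) n := by
  have h := descFac_double m n
  rw [Nat.descFactorial_eq_factorial_mul_choose, Nat.descFactorial_eq_factorial_mul_choose] at h
  have hfac : 0 < n.factorial := Nat.factorial_pos n
  have : n.factorial * (2 ^ n * Nat.choose m n) ≤ n.factorial * Nat.choose (2 * m) n := by
    calc n.factorial * (2 ^ n * Nat.choose m n)
        = 2 ^ n * (n.factorial * Nat.choose m n) := by ring
      _ ≤ n.factorial * Nat.choose (2 * m) n := h
  exact Nat.le_of_mul_le_mul_left this hfac

theorem telescoping_sum_bound (k r m : ℕ) (hr : 3 ≤ r) (hk : r ≤ k)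
    (hhalf : (r : ℝ) - 1 ≤ (k : ℝ) / 2) (hm : m ≤ k) :
    (∑ s ∈ Finset.Ico (k - m) k, (Nat.choose (s / 2) (r - 1) : ℝ))
      ≤ (m : ℝ) / 2 ^ (r - 1) * (Nat.choose k (r - 1) : ℝ) := by
  have hterm : ∀ s ∈ Finset.Ico (k - m) k,
      (Nat.choose (s / 2) (r - 1) : ℝ) ≤ (Nat.choose k (r - 1) : ℝ) / 2 ^ (r - 1) := by
    intro s hs
    rw [Finset.mem_Ico] at hs
    have h1 : 2 ^ (r - 1) * Nat.choose (s / 2) (r - 1) ≤ Nat.choose (2 * (s / 2)) (r - 1) :=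
      choose_double _ _
    have h2 : Nat.choose (2 * (s / 2)) (r - 1) ≤ Nat.choose k (r - 1) :=
      Nat.choose_le_choose _ (by omega)
    have h3 : 2 ^ (r - 1) * Nat.choose (s / 2) (r - 1) ≤ Nat.choose k (r - 1) := h1.trans h2
    have h3' : (2 : ℝ) ^ (r - 1) * (Nat.choose (s / 2) (r - 1) : ℝ) ≤ (Nat.choose k (r - 1) : ℝ) := by
      exact_mod_cast h3
    have hpos : (0 : ℝ) < 2 ^ (r - 1) := by positivity
    rw [le_div_iff₀ hpos]
    linarith
  calc (∑ s ∈ Finset.Ico (k - m) k, (Nat.choose (s / 2) (r - 1) : ℝ))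
      ≤ ∑ s ∈ Finset.Ico (k - m) k, (Nat.choose k (r - 1) : ℝ) / 2 ^ (r - 1) :=
        Finset.sum_le_sum hterm
    _ = (m : ℝ) / 2 ^ (r - 1) * (Nat.choose k (r - 1) : ℝ) := by
        rw [Finset.sum_const, Nat.card_Ico]
        have : k - (k - m) = m := by omega
        rw [this]
        push_cast
        ring
end

section
/- For integers k ≥ r ≥ 3, Σ_{i=0}^∞ C(k/2^i, r) ≤ (2^r/(2^r − 1))·C(k, r), where C(x,r) is the extended binomial coefficient (x(x−1)···(x−r+1)/r! for x ≥ r−1, and 0 otherwise), so the sum has finitely many nonzero terms. -/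
lemma extBinom_nonneg (x : ℝ) (r : ℕ) : 0 ≤ extBinom x r := by
  unfold extBinom
  split
  · rename_i h
    apply div_nonneg
    · apply Finset.prod_nonneg
      intro j hj
      rw [Finset.mem_range] at hj
      have : (j : ℝ) + 1 ≤ r := by exact_mod_cast hj
      linarith
    · positivity
  · exact le_rfl

lemma extBinom_half_le (x : ℝ) (hx : 0 ≤ x) (r : ℕ) :
    extBinom (x / 2) r ≤ extBinom x r / 2 ^ r := by
  by_cases h : (r : ℝ) - 1 ≤ x / 2
  · have hx' : (r : ℝ) - 1 ≤ x := by linarith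
    rw [show extBinom (x / 2) r = (∏ j ∈ Finset.range r, (x / 2 - (j : ℝ))) / (Nat.factorial r)
        from if_pos h,
      show extBinom x r = (∏ j ∈ Finset.range r, (x - (j : ℝ))) / (Nat.factorial r)
        from if_pos hx']
    have hprod : ∏ j ∈ Finset.range r, (x / 2 - (j : ℝ))
        ≤ ∏ j ∈ Finset.range r, ((x - (j : ℝ)) / 2) := by
      apply Finset.prod_le_prod
      · intro j hj
        rw [Finset.mem_range] at hj
        have : (j : ℝ) + 1 ≤ r := by exact_mod_cast hj
        linarith
      · intro j hj
        have hj0 : (0 : ℝ) ≤ j := Nat.cast_nonneg j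
        linarith
    have heq : ∏ j ∈ Finset.range r, ((x - (j : ℝ)) / 2)
        = (∏ j ∈ Finset.range r, (x - (j : ℝ))) / 2 ^ r := by
      rw [Finset.prod_div_distrib, Finset.prod_const, Finset.card_range]
    rw [heq] at hprod
    have hfact : (0 : ℝ) < Nat.factorial r := by positivity
    calc (∏ j ∈ Finset.range r, (x / 2 - (j : ℝ))) / (Nat.factorial r)
        ≤ ((∏ j ∈ Finset.range r, (x - (j : ℝ))) / 2 ^ r) / (Nat.factorial r) :=
          div_le_div_of_nonneg_right hprod hfact.le
      _ = (∏ j ∈ Finset.range r, (x - (j : ℝ))) / (Nat.factorial r) / 2 ^ r := by ring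
  · rw [show extBinom (x / 2) r = 0 from if_neg h]
    exact div_nonneg (extBinom_nonneg x r) (by positivity)

lemma extBinom_pow_le (k r : ℕ) (i : ℕ) :
    extBinom ((k : ℝ) / 2 ^ i) r ≤ extBinom (k : ℝ) r * (1 / 2 ^ r) ^ i := by
  induction i with
  | zero => simp
  | succ n ih =>
    have h1 : (k : ℝ) / 2 ^ (n + 1) = ((k : ℝ) / 2 ^ n) / 2 := by
      rw [pow_succ]; ring
    have h2 := extBinom_half_le ((k : ℝ) / 2 ^ n) (by positivity) r
    rw [h1]
    calc extBinom ((k : ℝ) / 2 ^ n / 2) r ≤ extBinom ((k : ℝ) / 2 ^ n) r / 2 ^ r := h2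
      _ ≤ extBinom (k : ℝ) r * (1 / 2 ^ r) ^ n / 2 ^ r := by
          apply div_le_div_of_nonneg_right ih (by positivity)
      _ = extBinom (k : ℝ) r * (1 / 2 ^ r) ^ (n + 1) := by
          rw [pow_succ]; ring

theorem geometric_extBinom_sum (k r : ℕ) (hr : 3 ≤ r) (hk : r ≤ k) :
    ∑' i : ℕ, extBinom ((k : ℝ) / 2 ^ i) r
      ≤ 2 ^ r / (2 ^ r - 1) * extBinom (k : ℝ) r := by
  have hlt : (1 : ℝ) / 2 ^ r < 1 := by
    rw [div_lt_one (by positivity)]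
    exact one_lt_pow₀ (by norm_num) (by omega)
  have hgeo : Summable fun i : ℕ => ((1 : ℝ) / 2 ^ r) ^ i :=
    summable_geometric_of_lt_one (by positivity) hlt
  have hrhs : Summable fun i : ℕ => extBinom (k : ℝ) r * ((1 : ℝ) / 2 ^ r) ^ i :=
    hgeo.mul_left _
  have hlhs : Summable fun i : ℕ => extBinom ((k : ℝ) / 2 ^ i) r :=
    Summable.of_nonneg_of_le (fun i => extBinom_nonneg _ _)
      (fun i => extBinom_pow_le k r i) hrhs
  calc ∑' i : ℕ, extBinom ((k : ℝ) / 2 ^ i) r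
      ≤ ∑' i : ℕ, extBinom (k : ℝ) r * ((1 : ℝ) / 2 ^ r) ^ i :=
        Summable.tsum_le_tsum (fun i => extBinom_pow_le k r i) hlhs hrhs
    _ = extBinom (k : ℝ) r * (1 - 1 / 2 ^ r)⁻¹ := by
        rw [tsum_mul_left, tsum_geometric_of_lt_one (by positivity) hlt]
    _ = 2 ^ r / (2 ^ r - 1) * extBinom (k : ℝ) r := by
        have h1 : (1 : ℝ) < 2 ^ r := one_lt_pow₀ (by norm_num) (by omega)
        field_simp
end

section
/- For every integer r ≥ 3 and real c ≥ 1, c^r − (1/2^{r−1} + 1/3^{r−1})·c·r + 1 − 2^{r−1}/(2^r − 1) ≥ 0. -/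
lemma aux_nat (r : ℕ) (hr : 3 ≤ r) :
    12 * r * (3 ^ (r - 1) + 2 ^ (r - 1)) ≤ 13 * 6 ^ (r - 1) := by
  induction r, hr using Nat.le_induction with
  | base => norm_num
  | succ n hn ih =>
    have h1 : n - 1 + 1 = n := by omega
    have h2 : (n + 1) - 1 = n := rfl
    rw [h2]
    have e3 : 3 ^ n = 3 * 3 ^ (n - 1) := by rw [← pow_succ']; rw [h1]
    have e2 : 2 ^ n = 2 * 2 ^ (n - 1) := by rw [← pow_succ']; rw [h1]
    have e6 : 6 ^ n = 6 * 6 ^ (n - 1) := by rw [← pow_succ']; rw [h1]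
    rw [e3, e2, e6]
    have hp3 : 1 ≤ 3 ^ (n - 1) := Nat.one_le_pow _ _ (by norm_num)
    have hp2 : 1 ≤ 2 ^ (n - 1) := Nat.one_le_pow _ _ (by norm_num)
    have hA : 3 ^ (n - 1) ≤ n * 3 ^ (n - 1) := Nat.le_mul_of_pos_left _ (by omega)
    have hB : 2 ^ (n - 1) ≤ n * 2 ^ (n - 1) := Nat.le_mul_of_pos_left _ (by omega)
    nlinarith [ih, hA, hB]

theorem ineq_case_a (r : ℕ) (hr : 3 ≤ r) (c : ℝ) (hc : 1 ≤ c) :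
    0 ≤ c ^ r - (1 / 2 ^ (r - 1) + 1 / 3 ^ (r - 1)) * c * r + 1
        - 2 ^ (r - 1) / (2 ^ r - 1) := by
  have hc0 : (0:ℝ) < c := lt_of_lt_of_le one_pos hc
  have h2p : (0:ℝ) < 2 ^ (r - 1) := by positivity
  have h3p : (0:ℝ) < 3 ^ (r - 1) := by positivity
  -- Key bound 1: (1/2^(r-1) + 1/3^(r-1)) * r ≤ 13/12
  have hnat := aux_nat r hr
  have hnat' : (12:ℝ) * r * (3 ^ (r - 1) + 2 ^ (r - 1)) ≤ 13 * 6 ^ (r - 1) := by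
    exact_mod_cast hnat
  have h6 : (6:ℝ) ^ (r - 1) = 2 ^ (r - 1) * 3 ^ (r - 1) := by
    rw [← mul_pow]; norm_num
  have hA : (1 / 2 ^ (r - 1) + 1 / 3 ^ (r - 1)) * (r:ℝ) ≤ 13 / 12 := by
    rw [div_add_div _ _ (ne_of_gt h2p) (ne_of_gt h3p)]
    rw [div_mul_eq_mul_div, div_le_div_iff₀ (by positivity) (by norm_num)]
    rw [h6] at hnat'
    nlinarith [hnat']
  -- Key bound 2: 2^(r-1)/(2^r - 1) ≤ 4/7
  have h2r : (2:ℝ) ^ r = 2 * 2 ^ (r - 1) := by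
    rw [← pow_succ']
    congr 1
    omega
  have h2big : (4:ℝ) ≤ 2 ^ (r - 1) := by
    calc (4:ℝ) = 2 ^ 2 := by norm_num
    _ ≤ 2 ^ (r - 1) := by
        apply pow_le_pow_right₀ (by norm_num)
        omega
  have hden : (0:ℝ) < 2 ^ r - 1 := by
    rw [h2r]; nlinarith
  have hB : 2 ^ (r - 1) / ((2:ℝ) ^ r - 1) ≤ 4 / 7 := by
    rw [div_le_div_iff₀ hden (by norm_num), h2r]
    nlinarith
  -- c^3 ≤ c^r
  have hcr : c ^ 3 ≤ c ^ r := pow_le_pow_right₀ hc hr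
  have hAc : (1 / 2 ^ (r - 1) + 1 / 3 ^ (r - 1)) * c * (r:ℝ) ≤ 13 / 12 * c := by
    have hApos : (0:ℝ) ≤ 1 / 2 ^ (r - 1) + 1 / 3 ^ (r - 1) := by positivity
    calc (1 / 2 ^ (r - 1) + 1 / 3 ^ (r - 1)) * c * (r:ℝ)
        = (1 / 2 ^ (r - 1) + 1 / 3 ^ (r - 1)) * (r:ℝ) * c := by ring
      _ ≤ 13 / 12 * c := by
          apply mul_le_mul_of_nonneg_right hA (le_of_lt hc0)
  have key : (0:ℝ) ≤ c ^ 3 - 13 / 12 * c + 1 - 4 / 7 := by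
    nlinarith [sq_nonneg (c - 1), sq_nonneg c, mul_nonneg (sq_nonneg (c-1)) (le_of_lt hc0)]
  linarith
end
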